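/- For a non-encoding explanation e, the EVAL-X score exceeds the negative marginal entropy by exactly the mutual information between y and the explanation: EVAL-X(q,e) + H(y) = I(y ; x_{e(x)}), hence EVAL-X(q,e) ≥ −H(y). -/

import Mathlib

open scoped Classical

/-- Probability of an event under a probability mass function on a finite space. -/
noncomputable def Pr {Ω : Type*} [Fintype Ω] (p : Ω → ℝ) (E : Ω → Prop) : ℝ :=
  ∑ ω, if E ω then p ω else 0

/-- Conditional probability `P(A | B)`. -/
noncomputable def cPr {Ω : Type*} [Fintype Ω] (p : Ω → ℝ) (A B : Ω → Prop) : ℝ :=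
  Pr p (fun ω => A ω ∧ B ω) / Pr p B

/-!
The explanation together with the values it selects is one random variable
`g = (e(x), x_{e(x)})`, and the conditioning event of the full explanation is exactly the
fibre `{g = g(ω)}`. By non-encoding, EVAL-X is `∑ p log P(y | g)`, and splitting
`P(y | g) = P(y) · (P(y | g) / P(y))` gives `−H(y) + I(y; g)`. The mutual information is
nonnegative by `log t ≥ 1 - 1/t`, since `∑ P(y)P(g)` over the joint support is at most `1`.
-/

open Real Finset

section Probability

variable {Ω α β : Type*} [Fintype Ω] {p : Ω → ℝ}

lemma Pr_eq_sum_filter (E : Ω → Prop) : Pr p E = ∑ ω ∈ univ.filter E, p ω :=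
  (sum_filter _ _).symm

lemma Pr_nonneg (hp : ∀ ω, 0 ≤ p ω) (E : Ω → Prop) : 0 ≤ Pr p E :=
  sum_nonneg fun ω _ => ite_nonneg (hp ω) le_rfl

lemma Pr_pos (hp : ∀ ω, 0 < p ω) {E : Ω → Prop} {ω : Ω} (h : E ω) : 0 < Pr p E :=
  sum_pos' (fun ω _ => ite_nonneg (hp ω).le le_rfl) ⟨ω, mem_univ ω, by simpa [h] using hp ω⟩

lemma Pr_fiber_pos (hp : ∀ ω, 0 < p ω) (f : Ω → α) (ω : Ω) : 0 < Pr p (f · = f ω) :=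
  Pr_pos hp rfl

lemma sum_mul_comp_eq_sum_Pr_mul {t : Finset α} (f : Ω → α) (ht : ∀ ω, f ω ∈ t)
    (F : α → ℝ) : ∑ ω, p ω * F (f ω) = ∑ a ∈ t, Pr p (f · = a) * F a := by
  rw [← sum_fiberwise_of_maps_to (fun ω _ => ht ω)]
  refine sum_congr rfl fun a _ => ?_
  rw [Pr_eq_sum_filter, sum_mul]
  exact sum_congr rfl fun ω hω => by rw [(mem_filter.1 hω).2]

lemma sum_Pr_eq_one (hsum : ∑ ω, p ω = 1) {t : Finset α} (f : Ω → α) (ht : ∀ ω, f ω ∈ t) :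
    ∑ a ∈ t, Pr p (f · = a) = 1 := by
  simpa [hsum] using (sum_mul_comp_eq_sum_Pr_mul (p := p) f ht fun _ => 1).symm

noncomputable def mutualInfo (p : Ω → ℝ) (f : Ω → α) (g : Ω → β) : ℝ :=
  ∑ ω, p ω * log (cPr p (f · = f ω) (g · = g ω) / Pr p (f · = f ω))

lemma cPr_pos (hp : ∀ ω, 0 < p ω) (f : Ω → α) (g : Ω → β) (ω : Ω) :
    0 < cPr p (f · = f ω) (g · = g ω) :=
  div_pos (Pr_pos hp (E := fun ω' => f ω' = f ω ∧ g ω' = g ω) ⟨rfl, rfl⟩) (Pr_fiber_pos hp g ω)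

lemma sum_mul_log_cPr_eq_sum_mul_log_Pr_add_mutualInfo [Fintype α] (hp : ∀ ω, 0 < p ω)
    (f : Ω → α) (g : Ω → β) :
    ∑ ω, p ω * log (cPr p (f · = f ω) (g · = g ω))
      = ∑ a, Pr p (f · = a) * log (Pr p (f · = a)) + mutualInfo p f g := by
  rw [mutualInfo, ← sum_mul_comp_eq_sum_Pr_mul f (fun ω => mem_univ (f ω)), ← sum_add_distrib]
  refine sum_congr rfl fun ω _ => ?_
  rw [log_div (cPr_pos hp f g ω).ne' (Pr_fiber_pos hp f ω).ne']
  ring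

lemma sum_mul_Pr_mul_Pr_div_Pr_and_le_one (hp : ∀ ω, 0 < p ω) (hsum : ∑ ω, p ω = 1)
    (f : Ω → α) (g : Ω → β) :
    ∑ ω, p ω * (Pr p (f · = f ω) * Pr p (g · = g ω)
      / Pr p (fun ω' => f ω' = f ω ∧ g ω' = g ω)) ≤ 1 := by
  let h : Ω → α × β := fun ω => (f ω, g ω)
  have hjoint : ∀ z : α × β, Pr p (fun ω' => f ω' = z.1 ∧ g ω' = z.2) = Pr p (h · = z) :=
    fun z => congrArg (Pr p) (funext fun ω => propext (Prod.ext_iff (x := h ω)).symm)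
  calc ∑ ω, p ω * (Pr p (f · = f ω) * Pr p (g · = g ω)
          / Pr p (fun ω' => f ω' = f ω ∧ g ω' = g ω))
      = ∑ z ∈ univ.image h, Pr p (h · = z) *
          (Pr p (f · = z.1) * Pr p (g · = z.2) / Pr p (fun ω' => f ω' = z.1 ∧ g ω' = z.2)) :=
        sum_mul_comp_eq_sum_Pr_mul h (fun ω => mem_image_of_mem h (mem_univ ω)) fun z =>
          Pr p (f · = z.1) * Pr p (g · = z.2) / Pr p (fun ω' => f ω' = z.1 ∧ g ω' = z.2)
    _ = ∑ z ∈ univ.image h, Pr p (f · = z.1) * Pr p (g · = z.2) := by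
        refine sum_congr rfl fun z hz => ?_
        obtain ⟨ω, -, rfl⟩ := mem_image.1 hz
        rw [hjoint]
        exact mul_div_cancel₀ _ (Pr_fiber_pos hp h ω).ne'
    _ ≤ ∑ z ∈ univ.image f ×ˢ univ.image g, Pr p (f · = z.1) * Pr p (g · = z.2) := by
        refine sum_le_sum_of_subset_of_nonneg ?_ fun z _ _ =>
          mul_nonneg (Pr_nonneg (fun ω => (hp ω).le) _) (Pr_nonneg (fun ω => (hp ω).le) _)
        rintro _ hz
        obtain ⟨ω, -, rfl⟩ := mem_image.1 hz
        exact mem_product.2 ⟨mem_image_of_mem f (mem_univ ω), mem_image_of_mem g (mem_univ ω)⟩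
    _ = 1 := by
        have hf := sum_Pr_eq_one hsum f fun ω => mem_image_of_mem f (mem_univ ω)
        have hg := sum_Pr_eq_one hsum g fun ω => mem_image_of_mem g (mem_univ ω)
        simp only [sum_product, ← sum_mul_sum, hf, hg, one_mul]

lemma mutualInfo_nonneg (hp : ∀ ω, 0 < p ω) (hsum : ∑ ω, p ω = 1) (f : Ω → α) (g : Ω → β) :
    0 ≤ mutualInfo p f g := by
  have hlog : ∀ ω, p ω * (1 - Pr p (f · = f ω) * Pr p (g · = g ω)
      / Pr p (fun ω' => f ω' = f ω ∧ g ω' = g ω))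
        ≤ p ω * log (cPr p (f · = f ω) (g · = g ω) / Pr p (f · = f ω)) := by
    intro ω
    have hpos := div_pos (cPr_pos hp f g ω) (Pr_fiber_pos hp f ω)
    have hinv : (cPr p (f · = f ω) (g · = g ω) / Pr p (f · = f ω))⁻¹
        = Pr p (f · = f ω) * Pr p (g · = g ω) / Pr p (fun ω' => f ω' = f ω ∧ g ω' = g ω) := by
      rw [cPr, inv_div, div_div_eq_mul_div]
    refine mul_le_mul_of_nonneg_left ?_ (hp ω).le
    have := log_le_sub_one_of_pos (inv_pos.2 hpos)
    rw [log_inv, hinv] at this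
    linarith
  calc (0 : ℝ)
      ≤ ∑ ω, p ω - ∑ ω, p ω * (Pr p (f · = f ω) * Pr p (g · = g ω)
          / Pr p (fun ω' => f ω' = f ω ∧ g ω' = g ω)) := by
        linarith [sum_mul_Pr_mul_Pr_div_Pr_and_le_one hp hsum f g]
    _ = ∑ ω, p ω * (1 - Pr p (f · = f ω) * Pr p (g · = g ω)
          / Pr p (fun ω' => f ω' = f ω ∧ g ω' = g ω)) := by
        rw [← sum_sub_distrib]
        exact sum_congr rfl fun ω _ => by ring
    _ ≤ mutualInfo p f g := sum_le_sum fun ω _ => hlog ω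

end Probability

section Explanation

variable {ι A : Type*}

def maskedValues (m : ι → Bool) (a : ι → A) : ι → Option A :=
  fun i => if m i then some (a i) else none

lemma maskedValues_eq_iff {m : ι → Bool} {a a' : ι → A} :
    maskedValues m a' = maskedValues m a ↔ ∀ i, m i = true → a' i = a i := by
  simp only [maskedValues, funext_iff]
  refine forall_congr' fun i => ?_
  cases m i <;> simp

lemma mk_maskedValues_eq_iff {m m' : ι → Bool} {a a' : ι → A} :
    (m', maskedValues m' a') = (m, maskedValues m a)
      ↔ m' = m ∧ ∀ i, m i = true → a' i = a i := by
  rw [Prod.mk.injEq]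
  constructor
  · rintro ⟨rfl, hv⟩
    exact ⟨rfl, maskedValues_eq_iff.1 hv⟩
  · rintro ⟨rfl, hv⟩
    exact ⟨rfl, maskedValues_eq_iff.2 hv⟩

end Explanation

/-- for a non-encoding explanation `e` (predicting from the explanation is
the same as predicting from its values), the EVAL-X score equals `−H(y) + I(y ; x_{e(x)})`,
hence is at least `−H(y)`.  Here `∑ y₀, P(y=y₀) log P(y=y₀)` is `−H(y)` and the mutual
information is written as `E[log (P(y | explanation) / P(y))]`. -/
theorem evalx_eq_negEntropy_add_MI_of_nonencoding
    {Ω A Y : Type*} [Fintype Ω] [Fintype Y] {d : ℕ}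
    (p : Ω → ℝ) (hp : ∀ ω, 0 < p ω) (hsum : ∑ ω, p ω = 1)
    (x : Ω → Fin d → A) (y : Ω → Y)
    (e : (Fin d → A) → (Fin d → Bool))
    (hnon : ∀ ω (y₀ : Y),
      cPr p (fun ω' => y ω' = y₀)
          (fun ω' => e (x ω') = e (x ω) ∧ ∀ i, e (x ω) i = true → x ω' i = x ω i)
        = cPr p (fun ω' => y ω' = y₀)
            (fun ω' => ∀ i, e (x ω) i = true → x ω' i = x ω i)) :
    ((∑ ω, p ω * Real.log (cPr p (fun ω' => y ω' = y ω)
          (fun ω' => ∀ i, e (x ω) i = true → x ω' i = x ω i)))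
      = (∑ y₀ : Y, Pr p (fun ω => y ω = y₀) * Real.log (Pr p (fun ω => y ω = y₀)))
        + (∑ ω, p ω * Real.log
            (cPr p (fun ω' => y ω' = y ω)
                (fun ω' => e (x ω') = e (x ω) ∧ ∀ i, e (x ω) i = true → x ω' i = x ω i)
              / Pr p (fun ω' => y ω' = y ω))))
    ∧ ((∑ y₀ : Y, Pr p (fun ω => y ω = y₀) * Real.log (Pr p (fun ω => y ω = y₀)))
        ≤ ∑ ω, p ω * Real.log (cPr p (fun ω' => y ω' = y ω)
            (fun ω' => ∀ i, e (x ω) i = true → x ω' i = x ω i))) := by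
  let g : Ω → (Fin d → Bool) × (Fin d → Option A) :=
    fun ω => (e (x ω), maskedValues (e (x ω)) (x ω))
  have hg : ∀ ω ω', (e (x ω') = e (x ω) ∧ ∀ i, e (x ω) i = true → x ω' i = x ω i)
      ↔ g ω' = g ω := fun _ _ => mk_maskedValues_eq_iff.symm
  simp only [hg] at hnon ⊢
  have heval : ∑ ω, p ω * log (cPr p (fun ω' => y ω' = y ω)
        (fun ω' => ∀ i, e (x ω) i = true → x ω' i = x ω i))
      = ∑ ω, p ω * log (cPr p (y · = y ω) (g · = g ω)) :=
    sum_congr rfl fun ω _ => by rw [hnon ω (y ω)]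
  rw [heval, sum_mul_log_cPr_eq_sum_mul_log_Pr_add_mutualInfo hp y g]
  exact ⟨rfl, le_add_of_nonneg_right (mutualInfo_nonneg hp hsum y g)⟩
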